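/- Let δ > 0 and let M₁, M₂, …, be independent 1-subgaussian real random variables with zero means; set μ̂ₙ = (1/n)·∑_{s=1}^n M_s. If T is a positive integer with T·δ² ≥ e², then ∑_{n=1}^T P(μ̂ₙ + √((2/n)·log((T/n)·(log²(T/n) + 1))) ≥ δ) ≤ 1 + 2·log(Tδ²·(log²(Tδ²) + 1))/δ² + 3/δ² + √(4π·log(Tδ²·(log²(Tδ²) + 1)))/δ². -/

import Mathlib

open MeasureTheory ProbabilityTheory Real
open scoped ENNReal

/-- `Z` is 1-subgaussian: `E[exp(λZ − λE[Z])] ≤ exp(λ²/2)` for all `λ ∈ ℝ`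
(with the integrability of the moment generating function). -/
def IsOneSubgaussian {Ω : Type*} [MeasurableSpace Ω] (μ : Measure Ω) (Z : Ω → ℝ) : Prop :=
  Integrable Z μ ∧ ∀ l : ℝ,
    Integrable (fun ω => Real.exp (l * Z ω - l * (∫ ω', Z ω' ∂μ))) μ ∧
    (∫ ω, Real.exp (l * Z ω - l * (∫ ω', Z ω' ∂μ)) ∂μ) ≤ Real.exp (l ^ 2 / 2)

/-!
Put `L = log (Tδ² (log² (Tδ²) + 1))` and `u = 2L/δ²`. For `n ≤ u` the `n`-th probability is
bounded by `1`. For `n > u` we have `nδ² ≥ 1`, so `T/n ≤ Tδ²` and, `x ↦ x (log² x + 1)` being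
increasing on `[1, ∞)`, the confidence width is at most `δ √(u/n)`; Hoeffding's inequality then
bounds the probability by `exp (-(δ²/2) (√n - √u)²)`. This bound is antitone in `n`, so the
sum is at most `u + ∫ᵤ^∞ exp (-(δ²/2) (√x - √u)²) dx`, and the substitution `x = (y + √u)²`
turns the integral into the Gaussian integrals `∫₀^∞ 2y e^{-ay²} = 1/a` and
`∫₀^∞ 2√u e^{-ay²} = √(πu/a)`.
-/

noncomputable def tailProfile (a u x : ℝ) : ℝ := exp (-a * max (√x - √u) 0 ^ 2)

section TailProfile

variable {a u : ℝ}

lemma tailProfile_nonneg (x : ℝ) : 0 ≤ tailProfile a u x := (exp_pos _).le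

lemma tailProfile_le_one (ha : 0 ≤ a) (x : ℝ) : tailProfile a u x ≤ 1 :=
  exp_le_one_iff.2 (by nlinarith [sq_nonneg (max (√x - √u) 0)])

lemma tailProfile_of_le {x : ℝ} (hx : x ≤ u) : tailProfile a u x = 1 := by
  simp [tailProfile, Real.sqrt_le_sqrt hx]

lemma tailProfile_of_ge {x : ℝ} (hx : u ≤ x) :
    tailProfile a u x = exp (-a * (√x - √u) ^ 2) := by
  rw [tailProfile, max_eq_left (sub_nonneg.2 (Real.sqrt_le_sqrt hx))]

lemma continuous_tailProfile : Continuous (tailProfile a u) := by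
  unfold tailProfile; fun_prop

lemma antitone_tailProfile (ha : 0 ≤ a) : Antitone (tailProfile a u) := by
  intro x y hxy
  have hmax : max (√x - √u) 0 ≤ max (√y - √u) 0 := by gcongr
  have hsq := pow_le_pow_left₀ (le_max_right _ _) hmax 2
  exact exp_le_exp.2 (by nlinarith)

end TailProfile

lemma integral_mul_exp_neg_mul_sq_le {a : ℝ} (ha : 0 < a) (c : ℝ) :
    ∫ y in (0 : ℝ)..c, y * exp (-a * y ^ 2) ≤ 1 / (2 * a) := by
  have hderiv : ∀ y ∈ Set.uIcc 0 c,
      HasDerivAt (fun z => -exp (-a * z ^ 2) / (2 * a)) (y * exp (-a * y ^ 2)) y := by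
    intro y _
    refine (((hasDerivAt_pow 2 y).const_mul (-a)).exp.neg.div_const (2 * a)).congr_deriv ?_
    field_simp
    ring
  rw [intervalIntegral.integral_eq_sub_of_hasDerivAt hderiv
    (Continuous.intervalIntegrable (by fun_prop) _ _)]
  have : 0 < exp (-a * c ^ 2) / (2 * a) := by positivity
  simp only [zero_pow two_ne_zero, mul_zero, exp_zero, neg_div]
  linarith

lemma integral_exp_neg_mul_sq_le {a c : ℝ} (ha : 0 < a) (hc : 0 ≤ c) :
    ∫ y in (0 : ℝ)..c, exp (-a * y ^ 2) ≤ √(π / a) / 2 := by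
  rw [intervalIntegral.integral_of_le hc, ← integral_gaussian_Ioi a]
  exact setIntegral_mono_set (integrable_exp_neg_mul_sq ha).integrableOn
    (.of_forall fun y => (exp_pos _).le) Set.Ioc_subset_Ioi_self.eventuallyLE

lemma integral_tailProfile_le {a u B : ℝ} (ha : 0 < a) (hu : 0 ≤ u) (huB : u ≤ B) :
    ∫ x in u..B, tailProfile a u x ≤ 1 / a + √u * √(π / a) := by
  set c := √B - √u
  have hc : 0 ≤ c := sub_nonneg.2 (Real.sqrt_le_sqrt huB)
  have hderiv : ∀ y ∈ Set.uIcc 0 c,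
      HasDerivAt (fun z => (z + √u) ^ 2) (2 * (y + √u)) y := fun y _ => by
    simpa [mul_comm] using ((hasDerivAt_id' y).add_const √u).fun_pow 2
  have hsubst := intervalIntegral.integral_comp_mul_deriv hderiv (by fun_prop)
    (continuous_tailProfile (a := a) (u := u))
  have hends : ((0 : ℝ) + √u) ^ 2 = u ∧ (c + √u) ^ 2 = B := by
    simp [c, Real.sq_sqrt hu, Real.sq_sqrt (hu.trans huB)]
  rw [hends.1, hends.2] at hsubst
  have hgauss : ∫ y in (0 : ℝ)..c, tailProfile a u ((y + √u) ^ 2) * (2 * (y + √u))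
      = ∫ y in (0 : ℝ)..c, (2 * (y * exp (-a * y ^ 2)) + 2 * √u * exp (-a * y ^ 2)) := by
    refine intervalIntegral.integral_congr fun y hy => ?_
    have hy : 0 ≤ y := by rw [Set.uIcc_of_le hc] at hy; exact hy.1
    simp only [tailProfile, Real.sqrt_sq (by positivity : 0 ≤ y + √u), add_sub_cancel_right,
      max_eq_left hy]
    ring
  rw [← hsubst]
  simp only [Function.comp_def]
  rw [hgauss, intervalIntegral.integral_add (Continuous.intervalIntegrable (by fun_prop) _ _)
    (Continuous.intervalIntegrable (by fun_prop) _ _), intervalIntegral.integral_const_mul,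
    intervalIntegral.integral_const_mul]
  have h1 := integral_mul_exp_neg_mul_sq_le ha c
  have h2 := mul_le_mul_of_nonneg_left (integral_exp_neg_mul_sq_le ha hc)
    (by positivity : 0 ≤ 2 * √u)
  have : 2 * (1 / (2 * a)) = 1 / a := by field_simp
  linarith

lemma integral_zero_tailProfile_le {a u B : ℝ} (ha : 0 < a) (hu : 0 ≤ u) (hB : 0 ≤ B) :
    ∫ x in (0 : ℝ)..B, tailProfile a u x ≤ u + 1 / a + √u * √(π / a) := by
  have hint : ∀ x y, IntervalIntegrable (tailProfile a u) volume x y :=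
    continuous_tailProfile.intervalIntegrable
  calc ∫ x in (0 : ℝ)..B, tailProfile a u x
      ≤ ∫ x in (0 : ℝ)..max B u, tailProfile a u x :=
        intervalIntegral.integral_mono_interval le_rfl hB (le_max_left _ _)
          (.of_forall tailProfile_nonneg) (hint _ _)
    _ = (∫ x in (0 : ℝ)..u, tailProfile a u x) + ∫ x in u..max B u, tailProfile a u x :=
        (intervalIntegral.integral_add_adjacent_intervals (hint _ _) (hint _ _)).symm
    _ ≤ (∫ _ in (0 : ℝ)..u, (1 : ℝ)) + (1 / a + √u * √(π / a)) := by
        gcongr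
        · exact intervalIntegral.integral_mono_on hu (hint _ _) intervalIntegrable_const
            fun x _ => tailProfile_le_one ha.le x
        · exact integral_tailProfile_le ha hu (le_max_right _ _)
    _ = u + 1 / a + √u * √(π / a) := by simp [add_assoc]

lemma sum_tailProfile_le {a u : ℝ} (ha : 0 < a) (hu : 0 ≤ u) (T : ℕ) :
    ∑ n ∈ Finset.Icc 1 T, tailProfile a u n ≤ u + 1 / a + √u * √(π / a) := by
  have hsum := (antitone_tailProfile (u := u) ha.le).antitoneOn (Set.Icc 0 (0 + T))
    |>.sum_le_integral
  rw [← Finset.Ico_add_one_right_eq_Icc, Finset.sum_Ico_eq_sum_range]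
  simp only [zero_add] at hsum
  simpa [add_comm] using hsum.trans (integral_zero_tailProfile_le ha hu T.cast_nonneg)

lemma IsOneSubgaussian.hasSubgaussianMGF {Ω : Type*} [MeasurableSpace Ω] {μ : Measure Ω}
    {Z : Ω → ℝ} (h : IsOneSubgaussian μ Z) :
    HasSubgaussianMGF (fun ω => Z ω - ∫ ω', Z ω' ∂μ) 1 μ where
  integrable_exp_mul t := by simpa only [mul_sub] using (h.2 t).1
  mgf_le t := by simpa only [mgf, mul_sub, NNReal.coe_one, one_mul] using (h.2 t).2

lemma measure_le_sum_div_add_le_tailProfile {Ω : Type*} [MeasurableSpace Ω] {μ : Measure Ω}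
    [IsProbabilityMeasure μ] {M : ℕ → Ω → ℝ} (hindep : iIndepFun M μ)
    (hsub : ∀ i, HasSubgaussianMGF (M i) 1 μ) {δ u ε : ℝ} (hδ : 0 ≤ δ) {n : ℕ} (hn : 0 < n)
    (hε : u < n → ε ≤ δ * √(u / n)) :
    μ {ω | δ ≤ (∑ s ∈ Finset.range n, M s ω) / n + ε}
      ≤ ENNReal.ofReal (tailProfile (δ ^ 2 / 2) u n) := by
  rcases le_or_gt (n : ℝ) u with hnu | hnu
  · rw [tailProfile_of_le hnu, ENNReal.ofReal_one]
    exact prob_le_one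
  have hn0 : (0 : ℝ) < n := by exact_mod_cast hn
  have hsn0 : 0 < √(n : ℝ) := Real.sqrt_pos.2 hn0
  have hεn : √n * ε ≤ δ * √u := by
    have := hε hnu
    rwa [Real.sqrt_div' _ hn0.le, ← mul_div_assoc, le_div_iff₀ hsn0, mul_comm] at this
  have hgap0 : 0 ≤ δ * (√n - √u) := mul_nonneg hδ (sub_nonneg.2 (Real.sqrt_le_sqrt hnu.le))
  have hgap : δ * (√n - √u) ≤ √n * (δ - ε) := by nlinarith
  have hnt : 0 ≤ n * (δ - ε) := by
    have : 0 ≤ δ - ε := nonneg_of_mul_nonneg_right (hgap0.trans hgap) hsn0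
    positivity
  have hevent : {ω | δ ≤ (∑ s ∈ Finset.range n, M s ω) / n + ε}
      = {ω | n * (δ - ε) ≤ ∑ s ∈ Finset.range n, M s ω} := by
    ext ω
    simp only [Set.mem_ofPred_eq]
    rw [← sub_le_iff_le_add, le_div_iff₀ hn0, mul_comm]
  have hoeffding := HasSubgaussianMGF.measure_sum_range_ge_le_of_iIndepFun (n := n) hindep
    (fun i _ => hsub i) hnt
  rw [hevent, tailProfile_of_ge hnu.le, ← ofReal_measureReal]
  refine ENNReal.ofReal_le_ofReal (hoeffding.trans (exp_le_exp.2 ?_))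
  have hsq := pow_le_pow_left₀ hgap0 hgap 2
  rw [mul_pow (√(n : ℝ)), Real.sq_sqrt hn0.le] at hsq
  rw [NNReal.coe_one, mul_one, div_le_iff₀ (by positivity)]
  nlinarith

lemma log_mul_log_sq_add_one_le {x y : ℝ} (hx : 1 ≤ x) (hxy : x ≤ y) :
    log (x * (log x ^ 2 + 1)) ≤ log (y * (log y ^ 2 + 1)) := by
  have hx0 : 0 < x := by positivity
  have hlog : log x ^ 2 ≤ log y ^ 2 :=
    pow_le_pow_left₀ (log_nonneg hx) (log_le_log hx0 hxy) 2
  exact log_le_log (by positivity) (mul_le_mul hxy (by linarith) (by positivity) (by linarith))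

lemma sqrt_two_div_mul_log_le {T δ n : ℝ} (hδ : 0 < δ) (hn : 0 < n) (hnT : n ≤ T)
    (hnδ : 1 ≤ n * δ ^ 2) :
    √((2 / n) * log ((T / n) * (log (T / n) ^ 2 + 1)))
      ≤ δ * √(2 * log (T * δ ^ 2 * (log (T * δ ^ 2) ^ 2 + 1)) / δ ^ 2 / n) := by
  have hTn : T / n ≤ T * δ ^ 2 := by
    rw [div_le_iff₀ hn]
    nlinarith
  have hlog := log_mul_log_sq_add_one_le ((one_le_div hn).2 hnT) hTn
  have hδsqrt : δ * √(2 * log (T * δ ^ 2 * (log (T * δ ^ 2) ^ 2 + 1)) / δ ^ 2 / n)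
      = √((2 / n) * log (T * δ ^ 2 * (log (T * δ ^ 2) ^ 2 + 1))) := by
    rw [← Real.sqrt_sq hδ.le, ← Real.sqrt_mul (sq_nonneg δ), Real.sqrt_sq hδ.le]
    field_simp
  rw [hδsqrt]
  exact Real.sqrt_le_sqrt (mul_le_mul_of_nonneg_left hlog (by positivity))

theorem stmt3_general {Ω : Type*} [MeasurableSpace Ω] (μ : Measure Ω) [IsProbabilityMeasure μ]
    (M : ℕ → Ω → ℝ)
    (hindep : iIndepFun M μ)
    (hsub : ∀ i, IsOneSubgaussian μ (M i))
    (hmean : ∀ i, (∫ ω, M i ω ∂μ) = 0)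
    (δ : ℝ) (hδ : 0 < δ)
    (T : ℕ) (hTδ : Real.exp 2 ≤ T * δ ^ 2) :
    (∑ n ∈ Finset.Icc 1 T,
        μ {ω | δ ≤ (∑ s ∈ Finset.range n, M s ω) / n
            + Real.sqrt ((2 / n) * Real.log (((T : ℝ) / n)
              * (Real.log ((T : ℝ) / n) ^ 2 + 1)))}) ≤
      ENNReal.ofReal (1 + 2 * Real.log (T * δ ^ 2 * (Real.log (T * δ ^ 2) ^ 2 + 1)) / δ ^ 2
        + 3 / δ ^ 2
        + Real.sqrt (4 * Real.pi * Real.log (T * δ ^ 2 * (Real.log (T * δ ^ 2) ^ 2 + 1)))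
          / δ ^ 2) := by
  set L := log (T * δ ^ 2 * (log (T * δ ^ 2) ^ 2 + 1))
  have hL : 2 ≤ L := by
    have hv : 0 < (T : ℝ) * δ ^ 2 := (exp_pos 2).trans_le hTδ
    have hlog : 2 ≤ log (T * δ ^ 2) := by simpa using log_le_log (exp_pos 2) hTδ
    exact hlog.trans (log_le_log hv (le_mul_of_one_le_right hv.le (by nlinarith)))
  set u := 2 * L / δ ^ 2
  have hsubG (i : ℕ) : HasSubgaussianMGF (M i) 1 μ := by
    simpa [hmean i] using (hsub i).hasSubgaussianMGF
  have hwidth (n : ℕ) (hn : n ∈ Finset.Icc 1 T) (hun : u < n) :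
      √((2 / n) * log ((T / n) * (log (T / n) ^ 2 + 1))) ≤ δ * √(u / n) := by
    rw [Finset.mem_Icc] at hn
    have hnδ : 2 * L < n * δ ^ 2 := by rwa [div_lt_iff₀ (by positivity)] at hun
    exact sqrt_two_div_mul_log_le hδ (by exact_mod_cast hn.1) (by exact_mod_cast hn.2)
      (by linarith)
  have hconst : √u * √(π / (δ ^ 2 / 2)) = √(4 * π * L) / δ ^ 2 := by
    rw [← Real.sqrt_mul (by positivity),
      show u * (π / (δ ^ 2 / 2)) = 4 * π * L / (δ ^ 2) ^ 2 by simp only [u]; field_simp; ring,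
      Real.sqrt_div' _ (by positivity), Real.sqrt_sq (by positivity)]
  calc _ ≤ ∑ n ∈ Finset.Icc 1 T, ENNReal.ofReal (tailProfile (δ ^ 2 / 2) u n) :=
        Finset.sum_le_sum fun n hn => measure_le_sum_div_add_le_tailProfile hindep hsubG hδ.le
          (Finset.mem_Icc.1 hn).1 (hwidth n hn)
    _ = ENNReal.ofReal (∑ n ∈ Finset.Icc 1 T, tailProfile (δ ^ 2 / 2) u n) :=
        (ENNReal.ofReal_sum_of_nonneg fun n _ => tailProfile_nonneg _).symm
    _ ≤ _ := by
        refine ENNReal.ofReal_le_ofReal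
          ((sum_tailProfile_le (by positivity) (by positivity) T).trans ?_)
        rw [hconst, one_div_div]
        have : 2 / δ ^ 2 ≤ 3 / δ ^ 2 := by gcongr; norm_num
        linarith

/-- Let `δ > 0`, `M₁, M₂, …` independent 1-subgaussian with zero means and
`μ̂ₙ = (1/n)·∑_{s=1}^n M_s`.  If `T` is a positive integer with `T·δ² ≥ e²`, then
`∑_{n=1}^T P(μ̂ₙ + √((2/n)·log((T/n)·(log²(T/n) + 1))) ≥ δ)
  ≤ 1 + 2·log(Tδ²·(log²(Tδ²)+1))/δ² + 3/δ² + √(4π·log(Tδ²·(log²(Tδ²)+1)))/δ²`. -/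
theorem stmt3 {Ω : Type*} [MeasurableSpace Ω] (μ : Measure Ω) [IsProbabilityMeasure μ]
    (M : ℕ → Ω → ℝ) (hmeas : ∀ i, Measurable (M i))
    (hindep : iIndepFun M μ)
    (hsub : ∀ i, IsOneSubgaussian μ (M i))
    (hmean : ∀ i, (∫ ω, M i ω ∂μ) = 0)
    (δ : ℝ) (hδ : 0 < δ)
    (T : ℕ) (hT : 0 < T) (hTδ : Real.exp 2 ≤ T * δ ^ 2) :
    (∑ n ∈ Finset.Icc 1 T,
        μ {ω | δ ≤ (∑ s ∈ Finset.range n, M s ω) / n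
            + Real.sqrt ((2 / n) * Real.log (((T : ℝ) / n)
              * (Real.log ((T : ℝ) / n) ^ 2 + 1)))}) ≤
      ENNReal.ofReal (1 + 2 * Real.log (T * δ ^ 2 * (Real.log (T * δ ^ 2) ^ 2 + 1)) / δ ^ 2
        + 3 / δ ^ 2
        + Real.sqrt (4 * Real.pi * Real.log (T * δ ^ 2 * (Real.log (T * δ ^ 2) ^ 2 + 1)))
          / δ ^ 2) :=
  stmt3_general μ M hindep hsub hmean δ hδ T hTδ
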